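/- arXiv:math/0609072 — 2 statements merged into one kernel-verified Lean document; each statement's English description precedes it below -/
import Mathlib

section
/- Let L = [b_1, …, b_r] be a nonempty list of integers, all entries at least 2, such that hj(L) = d·n²/(d·n·a−1) for some integers d ≥ 1 and n > a ≥ 1 with gcd(n, a) = 1. Then each of the two lists [2, b_1, …, b_{r−1}, b_r + 1] and [b_1 + 1, b_2, …, b_r, 2] has all entries at least 2 and Hirzebruch–Jung value of the form d·n'²/(d·n'·a'−1) for some integers n' > a' ≥ 1 with gcd(n', a') = 1 (with the same d). This is the numerical content of Proposition 2.2(2): the two operations on resolution strings preserve the class of strings resolving singularities of class T. -/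
/-!
Encode a string `[b₁, …, b_r]` by the product `M` of the matrices `!![bᵢ, -1; 1, 0]`, which lies in
`SL₂(ℤ)`. Its first column `(P, Q)` gives `hj = P/Q` in lowest terms, and for entries `≥ 2` one
has `0 ≤ -M₁₁ < Q`, so `M` is determined by the value `P/Q`. Hence `hj L = dn²/(dna - 1)` pins
`M` down to an explicit matrix in `d, n, a`. The two operations multiply `M` by fixed matrices on
either side, which turns the matrix for `(n, a)` into the ones for `(2n - a, n)` and `(n + a, a)`.
-/

/-- Hirzebruch–Jung continued fraction value of a list of integers, computed in ℚ
with its total inverse: `hj [b] = b` and `hj (b :: l) = b - (hj l)⁻¹`. -/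
def hj : List ℤ → ℚ
  | [] => 0
  | b :: l => (b : ℚ) - (hj l)⁻¹

/-- Add 1 to the last entry of a list of integers. -/
def addLast : List ℤ → List ℤ
  | [] => []
  | [b] => [b + 1]
  | b :: l => b :: addLast l

/-- Add 1 to the first entry of a list of integers. -/
def addHead : List ℤ → List ℤ
  | [] => []
  | b :: l => (b + 1) :: l

open Matrix

def hjMat (l : List ℤ) : Matrix (Fin 2) (Fin 2) ℤ :=
  (l.map fun b => !![b, -1; 1, 0]).prod

@[simp]
lemma hjMat_nil : hjMat [] = 1 := rfl

lemma hjMat_cons (b : ℤ) (l : List ℤ) : hjMat (b :: l) = !![b, -1; 1, 0] * hjMat l := rfl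

lemma hjMat_cons_eq (b : ℤ) (l : List ℤ) : hjMat (b :: l) =
    !![b * hjMat l 0 0 - hjMat l 1 0, b * hjMat l 0 1 - hjMat l 1 1; hjMat l 0 0, hjMat l 0 1] := by
  rw [hjMat_cons, eta_fin_two (hjMat l), mul_fin_two]
  simp [sub_eq_add_neg]

lemma hjMat_append (l l' : List ℤ) : hjMat (l ++ l') = hjMat l * hjMat l' := by
  simp [hjMat]

lemma det_hjMat (l : List ℤ) : (hjMat l).det = 1 := by
  induction l with
  | nil => simp
  | cons b l ih => rw [hjMat_cons, det_mul, ih]; simp [det_fin_two]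

lemma hjMat_addHead {l : List ℤ} (hl : l ≠ []) : hjMat (addHead l) = !![1, 1; 0, 1] * hjMat l := by
  obtain ⟨b, l, rfl⟩ := List.exists_cons_of_ne_nil hl
  rw [addHead, hjMat_cons, hjMat_cons, ← Matrix.mul_assoc]
  congr 1
  ext i j; fin_cases i <;> fin_cases j <;> simp

lemma hjMat_addLast {l : List ℤ} (hl : l ≠ []) :
    hjMat (addLast l) = hjMat l * !![1, 0; -1, 1] := by
  induction l with
  | nil => exact absurd rfl hl
  | cons b l ih =>
    cases l with
    | nil =>
      simp only [addLast, hjMat_cons, hjMat_nil, Matrix.mul_one]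
      ext i j; fin_cases i <;> fin_cases j <;> simp
    | cons c l =>
      change hjMat (b :: addLast (c :: l)) = _
      rw [hjMat_cons, ih (List.cons_ne_nil c l), hjMat_cons b (c :: l), Matrix.mul_assoc]

/-- A factor `!![b, -1; 1, 0]` with `b ≥ 2` maps `(p, q)` to `(b p - q, p)`, which does not
decrease `p` or the gap `p - q` as long as both are nonnegative. -/
lemma le_hjMat_mulVec {l : List ℤ} (hl : ∀ b ∈ l, 2 ≤ b) {v : Fin 2 → ℤ} (h0 : 0 ≤ v 0)
    (h1 : v 1 ≤ v 0) :
    v 0 ≤ (hjMat l *ᵥ v) 0 ∧ v 0 - v 1 ≤ (hjMat l *ᵥ v) 0 - (hjMat l *ᵥ v) 1 := by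
  induction l with
  | nil => simp
  | cons b l ih =>
    obtain ⟨ih0, ih1⟩ := ih fun x hx => hl x (List.mem_cons_of_mem b hx)
    have hb := hl b List.mem_cons_self
    rw [hjMat_cons, ← mulVec_mulVec, mulVec_fin_two]
    simp only [of_apply, cons_val', cons_val_zero, cons_val_one, empty_val', cons_val_fin_one]
    constructor <;> nlinarith

lemma hjMat_zero_zero_pos {l : List ℤ} (hl : ∀ b ∈ l, 2 ≤ b) : 0 < hjMat l 0 0 := by
  have h := (le_hjMat_mulVec hl (v := ![1, 0]) (by simp) (by simp)).1
  simp only [mulVec_fin_two, cons_val_zero, cons_val_one, cons_val_fin_one, mul_one, mul_zero,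
    add_zero] at h
  omega

lemma hj_eq_div {l : List ℤ} (hl : ∀ b ∈ l, 2 ≤ b) :
    hj l = (hjMat l 0 0 : ℚ) / hjMat l 1 0 := by
  induction l with
  | nil => simp [hj]
  | cons b l ih =>
    have hl' : ∀ x ∈ l, 2 ≤ x := fun x hx => hl x (List.mem_cons_of_mem b hx)
    have hP : (hjMat l 0 0 : ℚ) ≠ 0 := by exact_mod_cast (hjMat_zero_zero_pos hl').ne'
    rw [hj, ih hl', hjMat_cons_eq]
    simp only [inv_div, of_apply, cons_val', cons_val_zero, cons_val_one, cons_val_fin_one,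
      Int.cast_sub, Int.cast_mul]
    field_simp

lemma hjMat_bounds {l : List ℤ} (hne : l ≠ []) (hl : ∀ b ∈ l, 2 ≤ b) :
    0 < hjMat l 1 0 ∧ 0 ≤ -hjMat l 1 1 ∧ -hjMat l 1 1 < hjMat l 1 0 := by
  obtain ⟨b, l, rfl⟩ := List.exists_cons_of_ne_nil hne
  have hl' : ∀ x ∈ l, 2 ≤ x := fun x hx => hl x (List.mem_cons_of_mem b hx)
  have h1 := le_hjMat_mulVec hl' (v := ![0, -1]) (by simp) (by simp)
  have h2 := le_hjMat_mulVec hl' (v := ![1, 1]) (by simp) (by simp)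
  simp only [mulVec_fin_two, cons_val_zero, cons_val_one, cons_val_fin_one, mul_zero, mul_one,
    mul_neg] at h1 h2
  simp only [hjMat_cons_eq, of_apply, cons_val', cons_val_zero, cons_val_one, cons_val_fin_one]
  omega

lemma isCoprime_of_det_eq_one {M : Matrix (Fin 2) (Fin 2) ℤ} (hM : M.det = 1) :
    IsCoprime (M 0 0) (M 1 0) :=
  ⟨M 1 1, -M 0 1, by rw [det_fin_two] at hM; linear_combination hM⟩

lemma eq_of_det_eq_one_of_col_eq {M N : Matrix (Fin 2) (Fin 2) ℤ} (hM : M.det = 1)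
    (hN : N.det = 1) (h00 : M 0 0 = N 0 0) (h10 : M 1 0 = N 1 0)
    (h11 : |M 1 1 - N 1 1| < M 1 0) : M = N := by
  have hcop := (isCoprime_of_det_eq_one hM).symm
  rw [det_fin_two] at hM hN
  have hdvd : M 1 0 ∣ M 0 0 * (M 1 1 - N 1 1) :=
    ⟨M 0 1 - N 0 1, by rw [← h00, ← h10] at hN; linear_combination hM - hN⟩
  have e11 : M 1 1 = N 1 1 :=
    sub_eq_zero.mp (Int.eq_zero_of_abs_lt_dvd (hcop.dvd_of_dvd_mul_left hdvd) h11)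
  have e01 : M 0 1 = N 0 1 := by
    have hQ : M 1 0 ≠ 0 := by have := abs_nonneg (M 1 1 - N 1 1); omega
    exact mul_right_cancel₀ hQ (by rw [← h00, ← h10, ← e11] at hN; linear_combination hN - hM)
  ext i j; fin_cases i <;> fin_cases j <;> assumption

/-- `hjMat` of the resolution string of `(1/dn²)(1, dna - 1)`: the first column is `(dn², dna - 1)`,
and the second is the unique completion to determinant one with `0 ≤ -M₁₁ < M₁₀`. -/
def classTMat (d n a : ℤ) : Matrix (Fin 2) (Fin 2) ℤ :=
  !![d * n ^ 2, 1 - d * n * (n - a); d * n * a - 1, 1 - d * a * (n - a)]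

lemma det_classTMat (d n a : ℤ) : (classTMat d n a).det = 1 := by
  rw [classTMat, det_fin_two_of]; ring

lemma two_mul_classTMat_mul (d n a : ℤ) :
    !![2, -1; 1, 0] * classTMat d n a * !![1, 0; -1, 1] = classTMat d (2 * n - a) n := by
  simp only [classTMat, mul_fin_two]
  ext i j
  fin_cases i <;> fin_cases j <;>
    simp only [Fin.zero_eta, Fin.mk_one, of_apply, cons_val_zero, cons_val_one] <;> ring

lemma mul_classTMat_mul_two (d n a : ℤ) :
    !![1, 1; 0, 1] * classTMat d n a * !![2, -1; 1, 0] = classTMat d (n + a) a := by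
  simp only [classTMat, mul_fin_two]
  ext i j
  fin_cases i <;> fin_cases j <;>
    simp only [Fin.zero_eta, Fin.mk_one, of_apply, cons_val_zero, cons_val_one] <;> ring

lemma hjMat_eq_classTMat {l : List ℤ} (hne : l ≠ []) (hl : ∀ b ∈ l, 2 ≤ b) {d n a : ℤ}
    (hd : 1 ≤ d) (hna : a < n) (ha : 1 ≤ a) (hval : hj l = (d * n ^ 2 : ℚ) / (d * n * a - 1)) :
    hjMat l = classTMat d n a := by
  obtain ⟨hQpos, hY0, hYQ⟩ := hjMat_bounds hne hl
  have hdna : 0 < d * n * a - 1 := by nlinarith [one_le_mul_of_one_le_of_one_le hd ha]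
  obtain ⟨hP, hQ⟩ := Rat.div_int_inj hQpos hdna
    (Int.isCoprime_iff_gcd_eq_one.mp (isCoprime_of_det_eq_one (det_hjMat l)))
    (Int.isCoprime_iff_gcd_eq_one.mp (isCoprime_of_det_eq_one (det_classTMat d n a)))
    (by rw [← hj_eq_div hl, hval]; simp [classTMat])
  refine eq_of_det_eq_one_of_col_eq (det_hjMat l) (det_classTMat d n a) hP hQ ?_
  simp only [classTMat, of_apply, cons_val', cons_val_one, empty_val', cons_val_fin_one]
  rw [abs_lt]
  constructor <;> nlinarith

lemma hj_eq_of_hjMat_eq_classTMat {l : List ℤ} (hl : ∀ b ∈ l, 2 ≤ b) {d n a : ℤ}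
    (h : hjMat l = classTMat d n a) : hj l = (d * n ^ 2 : ℚ) / (d * n * a - 1) := by
  rw [hj_eq_div hl, h]
  simp [classTMat]

lemma exists_le_of_mem_addLast {l : List ℤ} {x : ℤ} (hx : x ∈ addLast l) : ∃ y ∈ l, y ≤ x := by
  induction l with
  | nil => simp [addLast] at hx
  | cons b l ih =>
    cases l with
    | nil => exact ⟨b, List.mem_singleton_self b, by simp [addLast] at hx; omega⟩
    | cons c l =>
      rcases List.mem_cons.mp hx with rfl | hx
      · exact ⟨x, List.mem_cons_self, le_rfl⟩
      · obtain ⟨y, hy, hyx⟩ := ih hx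
        exact ⟨y, List.mem_cons_of_mem b hy, hyx⟩

lemma exists_le_of_mem_addHead {l : List ℤ} {x : ℤ} (hx : x ∈ addHead l) : ∃ y ∈ l, y ≤ x := by
  cases l with
  | nil => simp [addHead] at hx
  | cons b l =>
    rcases List.mem_cons.mp hx with rfl | hx
    · exact ⟨b, List.mem_cons_self, by omega⟩
    · exact ⟨x, List.mem_cons_of_mem b hx, le_rfl⟩

/-- Proposition 2.2(2), numerically: if `L = [b₁, …, b_r]` is a nonempty list of integers
with all entries at least 2 and `hj L = d·n²/(d·n·a−1)` with `d ≥ 1`, `n > a ≥ 1`,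
`gcd(n, a) = 1`, then each of the lists `[2, b₁, …, b_{r−1}, b_r + 1]` and
`[b₁ + 1, b₂, …, b_r, 2]` has all entries at least 2 and Hirzebruch–Jung value of the
form `d·n'²/(d·n'·a'−1)` with `n' > a' ≥ 1`, `gcd(n', a') = 1` (same `d`). -/
theorem hj_classT_step (L : List ℤ) (hne : L ≠ []) (hL : ∀ b ∈ L, 2 ≤ b)
    (d n a : ℤ) (hd : 1 ≤ d) (hna : a < n) (ha : 1 ≤ a) (hcop : Int.gcd n a = 1)
    (hval : hj L = (d * n ^ 2 : ℚ) / (d * n * a - 1)) :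
    ∀ L' ∈ [2 :: addLast L, addHead L ++ [2]],
      (∀ b ∈ L', 2 ≤ b) ∧
      ∃ n' a' : ℤ, a' < n' ∧ 1 ≤ a' ∧ Int.gcd n' a' = 1 ∧
        hj L' = (d * n' ^ 2 : ℚ) / (d * n' * a' - 1) := by
  have hM := hjMat_eq_classTMat hne hL hd hna ha hval
  obtain ⟨u, v, huv⟩ := Int.isCoprime_iff_gcd_eq_one.mpr hcop
  simp only [List.mem_cons, List.not_mem_nil, or_false]
  rintro L' (rfl | rfl)
  · have hL' : ∀ b ∈ 2 :: addLast L, 2 ≤ b := List.forall_mem_cons.2 ⟨le_rfl, fun x hx =>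
      let ⟨y, hy, hyx⟩ := exists_le_of_mem_addLast hx; (hL y hy).trans hyx⟩
    refine ⟨hL', 2 * n - a, n, by omega, by omega,
      Int.isCoprime_iff_gcd_eq_one.mp ⟨-v, u + 2 * v, by linear_combination huv⟩,
      hj_eq_of_hjMat_eq_classTMat hL' ?_⟩
    rw [hjMat_cons, hjMat_addLast hne, hM, ← Matrix.mul_assoc, two_mul_classTMat_mul]
  · have hL' : ∀ b ∈ addHead L ++ [2], 2 ≤ b := List.forall_mem_append.2 ⟨fun x hx =>
      let ⟨y, hy, hyx⟩ := exists_le_of_mem_addHead hx; (hL y hy).trans hyx, by simp⟩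
    refine ⟨hL', n + a, a, by omega, ha,
      Int.isCoprime_iff_gcd_eq_one.mp ⟨u, v - u, by linear_combination huv⟩,
      hj_eq_of_hjMat_eq_classTMat hL' ?_⟩
    rw [hjMat_append, hjMat_addHead hne, hM, hjMat_cons, hjMat_nil, Matrix.mul_one,
      mul_classTMat_mul_two]
end

section
/- Let 𝒯 be the smallest set of nonempty lists of integers containing [4] and, for every m ≥ 0, the list [3, 2, …, 2, 3] with m twos in the middle, and closed under the two operations [b_1, …, b_r] ↦ [2, b_1, …, b_{r−1}, b_r + 1] and [b_1, …, b_r] ↦ [b_1 + 1, b_2, …, b_r, 2]. Then every list L ∈ 𝒯 has all entries at least 2, and hj(L) = d·n²/(d·n·a−1) for some integers d ≥ 1 and n > a ≥ 1 with gcd(n, a) = 1. (This is the numerical content of Propositions 2.1 and 2.2(1)(2): every string generated by the rules of Proposition 2.2 is the resolution string of a cyclic quotient singularity of type (1/dn²)(1, dna−1).) -/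
/-- The smallest set 𝒯 of lists of integers containing `[4]` and the lists
`[3, 2, …, 2, 3]` (with `m ≥ 0` twos in the middle), and closed under the operations
`[b₁, …, b_r] ↦ [2, b₁, …, b_{r−1}, b_r + 1]` and `[b₁, …, b_r] ↦ [b₁ + 1, b₂, …, b_r, 2]`. -/
inductive ClassT : List ℤ → Prop
  | base : ClassT [4]
  | basePair (m : ℕ) : ClassT (3 :: (List.replicate m 2 ++ [3]))
  | left {L : List ℤ} : ClassT L → ClassT (2 :: addLast L)
  | right {L : List ℤ} : ClassT L → ClassT (addHead L ++ [2])

/-!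
The value `hj [b_k, …, b_1]` is `p / q`, where `(p, q)` is the first column of the product
`hjMatrix` of the matrices `!![b, -1; 1, 0]`; entries `≥ 2` keep `0 ≤ q < p`, so no division
by zero occurs. Both operations defining `𝒯` multiply this product by fixed unimodular matrices
on either side, and they preserve the shape
`tMatrix d n a = !![d n², 1 - d n (n - a); d n a - 1, 1 - d a (n - a)]`,
acting by `(d, n, a) ↦ (d, 2n - a, n)` and `(d, n, a) ↦ (d, n + a, a)`, which keep
`n > a ≥ 1` and `gcd(n, a) = 1`. The generators are `tMatrix 1 2 1` and `tMatrix (m + 2) 2 1`.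
-/

lemma matrix_fin_two_eq_iff {α : Type*} {a b c d a' b' c' d' : α} :
    !![a, b; c, d] = !![a', b'; c', d'] ↔ a = a' ∧ b = b' ∧ c = c' ∧ d = d' := by
  simp only [EmbeddingLike.apply_eq_iff_eq, Matrix.vecCons_inj, and_true, and_assoc]

def hjMatrix (L : List ℤ) : Matrix (Fin 2) (Fin 2) ℤ :=
  (L.map fun b => !![b, -1; 1, 0]).prod

lemma hjMatrix_cons (b : ℤ) (l : List ℤ) :
    hjMatrix (b :: l) = !![b, -1; 1, 0] * hjMatrix l := by
  simp [hjMatrix]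

lemma hjMatrix_append (l l' : List ℤ) : hjMatrix (l ++ l') = hjMatrix l * hjMatrix l' := by
  simp [hjMatrix]

lemma hjMatrix_singleton (b : ℤ) : hjMatrix [b] = !![b, -1; 1, 0] := by
  simp [hjMatrix]

lemma hjMatrix_replicate_two (m : ℕ) :
    hjMatrix (List.replicate m 2) = !![(m : ℤ) + 1, -m; m, 1 - m] := by
  induction m with
  | zero => simp [hjMatrix, Matrix.one_fin_two]
  | succ k ih =>
    rw [List.replicate_succ, hjMatrix_cons, ih, Matrix.mul_fin_two, matrix_fin_two_eq_iff]
    push_cast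
    refine ⟨?_, ?_, ?_, ?_⟩ <;> ring

lemma hjMatrix_cons_col (b : ℤ) (l : List ℤ) :
    hjMatrix (b :: l) 0 0 = b * hjMatrix l 0 0 - hjMatrix l 1 0 ∧
      hjMatrix (b :: l) 1 0 = hjMatrix l 0 0 := by
  simp [hjMatrix_cons, Matrix.mul_apply, Fin.sum_univ_two, sub_eq_add_neg]

lemma hjMatrix_col_bounds {L : List ℤ} (h : ∀ b ∈ L, 2 ≤ b) :
    0 ≤ hjMatrix L 1 0 ∧ hjMatrix L 1 0 < hjMatrix L 0 0 := by
  induction L with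
  | nil => simp [hjMatrix]
  | cons b l ih =>
    obtain ⟨hq, hqp⟩ := ih fun c hc => h c (List.mem_cons_of_mem b hc)
    have hb : 2 ≤ b := h b List.mem_cons_self
    rw [(hjMatrix_cons_col b l).1, (hjMatrix_cons_col b l).2]
    exact ⟨by omega, by nlinarith⟩

lemma hj_eq_hjMatrix_div {L : List ℤ} (h : ∀ b ∈ L, 2 ≤ b) :
    hj L = (hjMatrix L 0 0 : ℚ) / hjMatrix L 1 0 := by
  induction L with
  | nil => simp [hj, hjMatrix]
  | cons b l ih =>
    have hl : ∀ c ∈ l, 2 ≤ c := fun c hc => h c (List.mem_cons_of_mem b hc)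
    obtain ⟨hq, hqp⟩ := hjMatrix_col_bounds hl
    have hp : (hjMatrix l 0 0 : ℚ) ≠ 0 := by exact_mod_cast (hq.trans_lt hqp).ne'
    rw [hj, ih hl, inv_div, (hjMatrix_cons_col b l).1, (hjMatrix_cons_col b l).2]
    push_cast
    field_simp

lemma addLast_append_singleton (l : List ℤ) (b : ℤ) : addLast (l ++ [b]) = l ++ [b + 1] := by
  induction l with
  | nil => rfl
  | cons c l ih =>
    cases l with
    | nil => rfl
    | cons c' l => simpa [addLast] using ih

lemma hjMatrix_addLast (l : List ℤ) (b : ℤ) :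
    hjMatrix (addLast (l ++ [b])) = hjMatrix (l ++ [b]) * !![1, 0; -1, 1] := by
  rw [addLast_append_singleton, hjMatrix_append, hjMatrix_append, mul_assoc,
    hjMatrix_singleton, hjMatrix_singleton, Matrix.mul_fin_two]
  congr 1
  norm_num

lemma hjMatrix_addHead (b : ℤ) (l : List ℤ) :
    hjMatrix (addHead (b :: l)) = !![1, 1; 0, 1] * hjMatrix (b :: l) := by
  rw [addHead, hjMatrix_cons, hjMatrix_cons, ← mul_assoc, Matrix.mul_fin_two]
  congr 1
  norm_num

def tMatrix (d n a : ℤ) : Matrix (Fin 2) (Fin 2) ℤ :=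
  !![d * n ^ 2, 1 - d * n * (n - a); d * n * a - 1, 1 - d * a * (n - a)]

lemma mul_tMatrix_mul_left (d n a : ℤ) :
    !![2, -1; 1, 0] * tMatrix d n a * !![1, 0; -1, 1] = tMatrix d (2 * n - a) n := by
  rw [tMatrix, tMatrix, Matrix.mul_fin_two, Matrix.mul_fin_two, matrix_fin_two_eq_iff]
  refine ⟨?_, ?_, ?_, ?_⟩ <;> ring

lemma mul_tMatrix_mul_right (d n a : ℤ) :
    !![1, 1; 0, 1] * tMatrix d n a * !![2, -1; 1, 0] = tMatrix d (n + a) a := by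
  rw [tMatrix, tMatrix, Matrix.mul_fin_two, Matrix.mul_fin_two, matrix_fin_two_eq_iff]
  refine ⟨?_, ?_, ?_, ?_⟩ <;> ring

namespace ClassT

lemma ne_nil {L : List ℤ} (h : ClassT L) : L ≠ [] := by
  cases h <;> simp

lemma two_le {L : List ℤ} (h : ClassT L) : ∀ b ∈ L, 2 ≤ b := by
  induction h with
  | base => simp
  | basePair m =>
    simp only [List.mem_cons, List.mem_append, List.mem_replicate, List.not_mem_nil, or_false]
    rintro c (rfl | ⟨-, rfl⟩ | rfl) <;> norm_num
  | @left M hM ih =>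
    obtain ⟨l, b, rfl⟩ := (List.eq_nil_or_concat' M).resolve_left hM.ne_nil
    simp only [addLast_append_singleton, List.mem_cons, List.mem_append, List.not_mem_nil,
      or_false]
    simp only [List.mem_append, List.mem_singleton] at ih
    rintro c (rfl | hc | rfl)
    exacts [le_rfl, ih c (.inl hc), by linarith [ih b (.inr rfl)]]
  | @right M hM ih =>
    obtain ⟨b, l, rfl⟩ := List.exists_cons_of_ne_nil hM.ne_nil
    simp only [addHead, List.cons_append, List.mem_cons, List.mem_append, List.not_mem_nil,
      or_false]
    rintro c (rfl | hc | rfl)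
    exacts [by linarith [ih b List.mem_cons_self], ih c (List.mem_cons_of_mem b hc), le_rfl]

lemma hjMatrix_eq_tMatrix {L : List ℤ} (h : ClassT L) :
    ∃ d n a : ℤ, 1 ≤ d ∧ a < n ∧ 1 ≤ a ∧ Int.gcd n a = 1 ∧ hjMatrix L = tMatrix d n a := by
  induction h with
  | base =>
    refine ⟨1, 2, 1, le_rfl, by norm_num, le_rfl, rfl, ?_⟩
    rw [hjMatrix_singleton, tMatrix, matrix_fin_two_eq_iff]
    norm_num
  | basePair m =>
    refine ⟨m + 2, 2, 1, by omega, by norm_num, le_rfl, rfl, ?_⟩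
    rw [hjMatrix_cons, hjMatrix_append, hjMatrix_replicate_two, hjMatrix_singleton, tMatrix,
      Matrix.mul_fin_two, Matrix.mul_fin_two, matrix_fin_two_eq_iff]
    refine ⟨?_, ?_, ?_, ?_⟩ <;> ring
  | @left M hM ih =>
    obtain ⟨d, n, a, hd, han, ha, hgcd, hML⟩ := ih
    obtain ⟨l, b, rfl⟩ := (List.eq_nil_or_concat' M).resolve_left hM.ne_nil
    refine ⟨d, 2 * n - a, n, hd, by omega, by omega, ?_, ?_⟩
    · rw [show 2 * n - a = n - a + n * 1 by ring, Int.gcd_add_mul_left_left,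
        Int.gcd_self_sub_left, Int.gcd_comm, hgcd]
    · rw [hjMatrix_cons, hjMatrix_addLast, hML, ← mul_assoc, mul_tMatrix_mul_left]
  | @right M hM ih =>
    obtain ⟨d, n, a, hd, han, ha, hgcd, hML⟩ := ih
    obtain ⟨b, l, rfl⟩ := List.exists_cons_of_ne_nil hM.ne_nil
    refine ⟨d, n + a, a, hd, by omega, ha, by rwa [Int.gcd_add_self_left], ?_⟩
    rw [hjMatrix_append, hjMatrix_addHead, hML, hjMatrix_singleton, mul_tMatrix_mul_right]

end ClassT

/-- Propositions 2.1 and 2.2(1)(2), numerically: every list in 𝒯 has all entries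
at least 2, and its Hirzebruch–Jung value equals `d·n²/(d·n·a−1)` for some
`d ≥ 1` and `n > a ≥ 1` with `gcd(n, a) = 1`. -/
theorem classT_hj (L : List ℤ) (hL : ClassT L) :
    (∀ b ∈ L, 2 ≤ b) ∧
    ∃ d n a : ℤ, 1 ≤ d ∧ a < n ∧ 1 ≤ a ∧ Int.gcd n a = 1 ∧
      hj L = (d * n ^ 2 : ℚ) / (d * n * a - 1) := by
  have h2 := hL.two_le
  obtain ⟨d, n, a, hd, han, ha, hgcd, hM⟩ := hL.hjMatrix_eq_tMatrix
  refine ⟨h2, d, n, a, hd, han, ha, hgcd, ?_⟩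
  rw [hj_eq_hjMatrix_div h2, hM]
  simp [tMatrix]
end
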